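/- arXiv:2104.12318 — 2 statements merged into one kernel-verified Lean document; each statement's English description precedes it below -/
import Mathlib

section
/- In a simply-laced triangle-free Coxeter system, let α be a link of rank r ≥ 1 with supp_{⟦2⟧}([α]) = {s,t} where m(s,t) = 3. Then the first two letters of α are st or ts. Symmetrically, if supp_{⟦2r⟧}([α]) = {s,t}, then the last two letters of α (positions 2r, 2r+1) are st or ts. -/
open List

namespace BraidFormal

variable {B : Type*}

/-- A single braid move: replace a factor `s t s` with `t s t` where `m(s,t) = 3`. -/
def IsBraidMove (M : CoxeterMatrix B) (w w' : List B) : Prop :=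
  ∃ (u v : List B) (s t : B), M s t = 3 ∧
    w = u ++ [s, t, s] ++ v ∧ w' = u ++ [t, s, t] ++ v

/-- Braid equivalence: the reflexive-transitive closure of braid moves. -/
def BraidEquiv (M : CoxeterMatrix B) : List B → List B → Prop :=
  Relation.ReflTransGen (IsBraidMove M)

/-- The braid class of a word. -/
def BraidClass (M : CoxeterMatrix B) (α : List B) : Set (List B) :=
  {β | BraidEquiv M α β}

/-- `w` has a braid shadow at (0-based) positions `i, i+1, i+2`:
the letters there are `s, t, s` with `m(s,t) = 3`.
(This corresponds to the 1-based interval `⟦i+1, i+3⟧` of the paper.) -/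
def HasShadowAt (M : CoxeterMatrix B) (w : List B) (i : ℕ) : Prop :=
  ∃ s t : B, M s t = 3 ∧ w[i]? = some s ∧ w[i+1]? = some t ∧ w[i+2]? = some s

/-- The braid class of `α` has a braid shadow at position `i`. -/
def ClassHasShadowAt (M : CoxeterMatrix B) (α : List B) (i : ℕ) : Prop :=
  ∃ β ∈ BraidClass M α, HasShadowAt M β i

/-- The rank of a reduced expression: the number of braid shadows of its braid class. -/
noncomputable def rank (M : CoxeterMatrix B) (α : List B) : ℕ :=
  Set.ncard {i | ClassHasShadowAt M α i}

/-- A Coxeter matrix is simply laced if all entries are at most 3. -/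
def SimplyLaced (M : CoxeterMatrix B) : Prop := ∀ s t : B, M s t ≤ 3

/-- A Coxeter matrix is triangle free if its Coxeter graph has no three-cycles
(all of whose edges are labelled 3). -/
def TriangleFree (M : CoxeterMatrix B) : Prop :=
  ∀ s t u : B, s ≠ t → t ≠ u → s ≠ u → M s t = 3 → M t u = 3 → M s u ≠ 3

/-- The set of generators appearing in (0-based) position `k` of some word in the
braid class of `α`. -/
def classSupp (M : CoxeterMatrix B) (α : List B) (k : ℕ) : Set B :=
  {s | ∃ β ∈ BraidClass M α, β[k]? = some s}

/-- The set of generators appearing in (0-based) positions `i` through `j` of `w`. -/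
def suppInterval (w : List B) (i j : ℕ) : Set B :=
  {s | ∃ k, i ≤ k ∧ k ≤ j ∧ w[k]? = some s}

variable {W : Type*} [Group W] {M : CoxeterMatrix B}

/-- `α` is a link of rank `r`: a reduced expression of length `2r+1` whose braid class
has braid shadows exactly at the (0-based) positions `0, 2, 4, …, 2r-2`
(the 1-based intervals `⟦1,3⟧, ⟦3,5⟧, …, ⟦2r-1,2r+1⟧`). -/
def IsLink (cs : CoxeterSystem M W) (α : List B) (r : ℕ) : Prop :=
  cs.IsReduced α ∧ α.length = 2 * r + 1 ∧
    ∀ i : ℕ, ClassHasShadowAt M α i ↔ ∃ j < r, i = 2 * j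

/-- A Fibonacci link: a link all of whose braid-class braid shadows are braid shadows
of the link itself. -/
def IsFibLink (cs : CoxeterSystem M W) (φ : List B) (r : ℕ) : Prop :=
  IsLink cs φ r ∧ ∀ i : ℕ, ClassHasShadowAt M φ i → HasShadowAt M φ i

/-!
Let `a b a` be the shadow of the class at the start (resp. end) of `α`; applying the braid move
there puts `b` and then `a` in the second (resp. second-to-last) position, so `{a, b} = {s, t}`.
A braid move changes just one of the two end letters only if it overlaps them in a single letter,
and then it starts at an odd (0-based) position, where a link has no shadows. So every move in the
class swaps the two end letters or leaves them alone, and the end of `α` is `a b` or `b a`.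
-/

theorem hasShadowAt_iff {w : List B} {i : ℕ} :
    HasShadowAt M w i ↔ ∃ (u v : List B) (s t : B), M s t = 3 ∧ u.length = i ∧
      w = u ++ [s, t, s] ++ v := by
  constructor
  · rintro ⟨s, t, hst, h0, h1, h2⟩
    obtain ⟨hi0, rfl⟩ := List.getElem?_eq_some_iff.1 h0
    obtain ⟨hi1, rfl⟩ := List.getElem?_eq_some_iff.1 h1
    obtain ⟨hi2, h2⟩ := List.getElem?_eq_some_iff.1 h2
    refine ⟨w.take i, w.drop (i + 3), w[i], w[i + 1], hst, by simp; omega, ?_⟩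
    conv_lhs => rw [← List.take_append_drop i w, List.drop_eq_getElem_cons hi0,
      List.drop_eq_getElem_cons hi1, List.drop_eq_getElem_cons hi2, h2]
    simp
  · rintro ⟨u, v, s, t, hst, rfl, rfl⟩
    exact ⟨s, t, hst, by simp, by simp, by simp⟩

theorem _root_.CoxeterMatrix.ne_of_eq_three {s t : B} (h : M s t = 3) : s ≠ t := by
  rintro rfl
  simp at h

theorem mem_classSupp_of_mem_braidClass {α u v : List B} {s t : B} (hst : M s t = 3)
    (hβ : u ++ [s, t, s] ++ v ∈ BraidClass M α) :
    s ∈ classSupp M α (u.length + 1) ∧ t ∈ classSupp M α (u.length + 1) :=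
  ⟨⟨u ++ [t, s, t] ++ v, hβ.tail ⟨u, v, s, t, hst, rfl, rfl⟩, by simp⟩, ⟨_, hβ, by simp⟩⟩

theorem perm_window_braidMove (u v : List B) (s t : B) {k : ℕ}
    (hk : u.length ≠ k + 1 ∧ u.length + 2 ≠ k) :
    ((u ++ [t, s, t] ++ v).drop k).take 2 ~ ((u ++ [s, t, s] ++ v).drop k).take 2 := by
  rcases lt_or_ge k u.length with hku | hku
  · have : 2 ≤ u.length - k := by omega
    simp [List.drop_append, List.take_append, hku.le, this]
  · obtain ⟨n, rfl⟩ := Nat.exists_eq_add_of_le hku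
    rw [List.append_assoc, List.append_assoc, List.drop_length_add_append,
      List.drop_length_add_append]
    rcases n with _ | _ | _ | n
    · exact List.Perm.swap s t []
    · exact List.Perm.swap t s []
    · omega
    · rfl

theorem perm_window_of_mem_braidClass {α β : List B} {k : ℕ}
    (hk : ∀ i, ClassHasShadowAt M α i → i ≠ k + 1 ∧ i + 2 ≠ k)
    (hβ : β ∈ BraidClass M α) :
    (β.drop k).take 2 ~ (α.drop k).take 2 := by
  induction hβ with
  | refl => rfl
  | @tail β γ hβ hmove ih =>
    obtain ⟨u, v, s, t, hst, rfl, rfl⟩ := hmove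
    have hshadow : ClassHasShadowAt M α u.length :=
      ⟨_, hβ, hasShadowAt_iff.2 ⟨u, v, s, t, hst, rfl, rfl⟩⟩
    exact (perm_window_braidMove u v s t (hk _ hshadow)).trans ih

theorem eq_or_eq_of_perm_pair {l : List B} {a b s t : B} (hab : a ≠ b)
    (ha : a ∈ ({s, t} : Set B)) (hb : b ∈ ({s, t} : Set B)) (hl : l ~ [a, b]) :
    l = [s, t] ∨ l = [t, s] := by
  simp only [Set.mem_insert_iff, Set.mem_singleton_iff] at ha hb
  rcases List.perm_pair.1 hl with rfl | rfl <;>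
    rcases ha with rfl | rfl <;> rcases hb with rfl | rfl <;> simp_all

theorem window_eq_of_classSupp_eq {α : List B} {i k : ℕ} {s t : B}
    (hk : ∀ j, ClassHasShadowAt M α j → j ≠ k + 1 ∧ j + 2 ≠ k)
    (hi : ClassHasShadowAt M α i) (hki : k = i ∨ k = i + 1)
    (hsupp : classSupp M α (i + 1) = {s, t}) :
    (α.drop k).take 2 = [s, t] ∨ (α.drop k).take 2 = [t, s] := by
  obtain ⟨β, hβ, hshadow⟩ := hi
  obtain ⟨u, v, a, b, hab, rfl, rfl⟩ := hasShadowAt_iff.1 hshadow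
  obtain ⟨ha, hb⟩ := mem_classSupp_of_mem_braidClass hab hβ
  rw [hsupp] at ha hb
  have hwindow : ((u ++ [a, b, a] ++ v).drop k).take 2 ~ [a, b] := by
    rcases hki with rfl | rfl
    · simp
    · simpa using List.Perm.swap a b []
  exact eq_or_eq_of_perm_pair (M.ne_of_eq_three hab) ha hb
    ((perm_window_of_mem_braidClass hk hβ).symm.trans hwindow)

theorem statement_4_general {B W : Type*} [Group W] {M : CoxeterMatrix B}
    (cs : CoxeterSystem M W)
    (α : List B) (r : ℕ) (hlink : IsLink cs α r) (hr : 1 ≤ r)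
    (s t : B) :
    (classSupp M α 1 = {s, t} → α.take 2 = [s, t] ∨ α.take 2 = [t, s]) ∧
    (classSupp M α (2 * r - 1) = {s, t} →
      α.drop (2 * r - 1) = [s, t] ∨ α.drop (2 * r - 1) = [t, s]) := by
  obtain ⟨-, hlen, hshadow⟩ := hlink
  have hends : ∀ k, (k = 0 ∨ k = 2 * r - 1) →
      ∀ i, ClassHasShadowAt M α i → i ≠ k + 1 ∧ i + 2 ≠ k := by
    intro k hk i hi
    obtain ⟨j, hj, rfl⟩ := (hshadow i).1 hi
    omega
  refine ⟨fun hsupp => ?_, fun hsupp => ?_⟩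
  · simpa using window_eq_of_classSupp_eq (hends 0 (Or.inl rfl)) ((hshadow 0).2 ⟨0, hr, rfl⟩)
      (Or.inl rfl) hsupp
  · have hend : 2 * (r - 1) + 1 = 2 * r - 1 := by omega
    have htake : (α.drop (2 * r - 1)).take 2 = α.drop (2 * r - 1) :=
      List.take_of_length_le (by simp; omega)
    rw [← htake]
    exact window_eq_of_classSupp_eq (hends _ (Or.inr rfl))
      ((hshadow _).2 ⟨r - 1, by omega, rfl⟩) (Or.inr hend.symm) (hend ▸ hsupp)

/-- the two ends of a link are rigid.  (0-based positions: position 1 is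
the 1-based position 2; positions `2r-1, 2r` are the 1-based positions `2r, 2r+1`.) -/
theorem statement_4 {B W : Type*} [Group W] {M : CoxeterMatrix B}
    (cs : CoxeterSystem M W) (hsl : SimplyLaced M) (htf : TriangleFree M)
    (α : List B) (r : ℕ) (hlink : IsLink cs α r) (hr : 1 ≤ r)
    (s t : B) (hm : M s t = 3) :
    (classSupp M α 1 = {s, t} → α.take 2 = [s, t] ∨ α.take 2 = [t, s]) ∧
    (classSupp M α (2 * r - 1) = {s, t} →
      α.drop (2 * r - 1) = [s, t] ∨ α.drop (2 * r - 1) = [t, s]) :=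
  statement_4_general cs α r hlink hr s t

end BraidFormal
end

section
/- In a simply-laced triangle-free Coxeter system, if α is a link of rank r ≥ 2, then for each 1 ≤ i ≤ r−1 there exists a reduced expression σ braid equivalent to α such that both ⟦2i−1,2i+1⟧ and ⟦2i+1,2i+3⟧ are braid shadows of σ; that is, consecutive braid shadows of a braid chain can be made to occur simultaneously in a single reduced expression. -/
open List

namespace BraidFormal

variable {B : Type*}

variable {W : Type*} [Group W] {M : CoxeterMatrix B}

/-! In the braid class of a link every braid shadow, hence every braid move, sits at an even
position. Follow a chain of braid moves from a word with a shadow at `i` to one with a shadow at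
`i + 2`, keeping a word of the class that has the shadow at `i` and agrees with the current word
from position `i + 1` on. A move at `i` produces such a word itself; a move at `i + 2` starts
from a word with the shadow at `i + 2`, so the kept word already has both shadows; a move at a
position `≤ i - 2` leaves the tail from `i + 1` unchanged; and a move at a position `≥ i + 3`
can be replayed on the kept word without touching its shadow at `i`. Parity rules out moves at
`i ± 1`, which would touch both the shadow at `i` and the tail. -/

def IsBraidMoveAt (M : CoxeterMatrix B) (p : ℕ) (w w' : List B) : Prop :=
  ∃ (u v : List B) (s t : B), M s t = 3 ∧ u.length = p ∧
    w = u ++ [s, t, s] ++ v ∧ w' = u ++ [t, s, t] ++ v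

theorem isBraidMove_iff_exists_isBraidMoveAt {w w' : List B} :
    IsBraidMove M w w' ↔ ∃ p, IsBraidMoveAt M p w w' := by
  constructor
  · rintro ⟨u, v, s, t, h3, rfl, rfl⟩
    exact ⟨u.length, u, v, s, t, h3, rfl, rfl, rfl⟩
  · rintro ⟨p, u, v, s, t, h3, -, rfl, rfl⟩
    exact ⟨u, v, s, t, h3, rfl, rfl⟩

theorem HasShadowAt.congr {w w' : List B} {i : ℕ} (h : HasShadowAt M w i)
    (hw : ∀ q, i ≤ q → q ≤ i + 2 → w'[q]? = w[q]?) : HasShadowAt M w' i := by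
  obtain ⟨s, t, h3, h0, h1, h2⟩ := h
  exact ⟨s, t, h3, (hw _ le_rfl (by omega)).trans h0, (hw _ (by omega) (by omega)).trans h1,
    (hw _ (by omega) le_rfl).trans h2⟩

theorem HasShadowAt.of_drop_eq {w w' : List B} {i k : ℕ} (h : HasShadowAt M w i) (hk : k ≤ i)
    (hw : w'.drop k = w.drop k) : HasShadowAt M w' i :=
  h.congr fun q hq _ => by
    simpa only [List.getElem?_drop, Nat.add_sub_cancel' (hk.trans hq)] using
      congrArg (·[q - k]?) hw

namespace IsBraidMoveAt

variable {p : ℕ} {w w' : List B}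

theorem symm (h : IsBraidMoveAt M p w w') : IsBraidMoveAt M p w' w := by
  obtain ⟨u, v, s, t, h3, hu, rfl, rfl⟩ := h
  exact ⟨u, v, t, s, (M.symmetric t s).trans h3, hu, rfl, rfl⟩

theorem hasShadowAt_left (h : IsBraidMoveAt M p w w') : HasShadowAt M w p := by
  obtain ⟨u, v, s, t, h3, rfl, rfl, rfl⟩ := h
  refine ⟨s, t, h3, ?_, ?_, ?_⟩ <;> simp

theorem hasShadowAt_right (h : IsBraidMoveAt M p w w') : HasShadowAt M w' p :=
  h.symm.hasShadowAt_left

theorem getElem?_eq (h : IsBraidMoveAt M p w w') {q : ℕ} (hq : q < p ∨ p + 3 ≤ q) :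
    w'[q]? = w[q]? := by
  obtain ⟨u, v, s, t, h3, rfl, rfl, rfl⟩ := h
  rcases hq with hq | hq
  · simp [List.getElem?_append_left, hq]
  · obtain ⟨n, rfl⟩ : ∃ n, q = u.length + (n + 3) := ⟨q - u.length - 3, by omega⟩
    simp [List.getElem?_append]

theorem drop_eq (h : IsBraidMoveAt M p w w') {k : ℕ} (hk : p + 3 ≤ k) :
    w'.drop k = w.drop k :=
  List.ext_getElem? fun n => by
    simp only [List.getElem?_drop]
    exact h.getElem?_eq (by omega)

theorem hasShadowAt_of_disjoint (h : IsBraidMoveAt M p w w') {i : ℕ} (hi : HasShadowAt M w i)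
    (hpi : i + 3 ≤ p ∨ p + 3 ≤ i) : HasShadowAt M w' i :=
  hi.congr fun _ _ _ => h.getElem?_eq (by omega)

theorem exists_of_drop_eq (h : IsBraidMoveAt M p w w') {k : ℕ} (hk : k ≤ p) {v : List B}
    (hv : v.drop k = w.drop k) : ∃ v', IsBraidMoveAt M p v v' ∧ v'.drop k = w'.drop k := by
  obtain ⟨u, x, s, t, h3, rfl, rfl, rfl⟩ := h
  have hvk : k ≤ v.length := by
    by_contra hlt
    have := congrArg List.length hv
    simp only [List.length_drop, List.length_append, List.length_cons, List.length_nil] at this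
    omega
  have htake : (v.take k).length = k := by simp [hvk]
  have hlen : (v.take k ++ u.drop k).length = u.length := by
    simp only [List.length_append, htake, List.length_drop]; omega
  refine ⟨v.take k ++ (u.drop k ++ [t, s, t] ++ x),
    ⟨v.take k ++ u.drop k, x, s, t, h3, hlen, ?_, by simp⟩, ?_⟩
  · conv_lhs => rw [← List.take_append_drop k v, hv]
    simp [List.drop_append_of_le_length hk]
  · simp [List.drop_append_of_le_length hk, List.drop_left' htake]

end IsBraidMoveAt

theorem IsBraidMove.symm {w w' : List B} (h : IsBraidMove M w w') : IsBraidMove M w' w := by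
  obtain ⟨p, hp⟩ := isBraidMove_iff_exists_isBraidMoveAt.mp h
  exact isBraidMove_iff_exists_isBraidMoveAt.mpr ⟨p, hp.symm⟩

theorem BraidEquiv.symm {w w' : List B} (h : BraidEquiv M w w') : BraidEquiv M w' w := by
  induction h with
  | refl => exact .refl
  | tail _ hmove ih => exact .head hmove.symm ih

section ConsecutiveShadows

variable {α : List B} {i : ℕ}

theorem exists_hasShadowAt_and_hasShadowAt_add_two_or_drop_eq
    (hpar : ∀ p, ClassHasShadowAt M α p → Even p) {β γ : List B}
    (hβ : β ∈ BraidClass M α) (hβi : HasShadowAt M β i) (hβγ : BraidEquiv M β γ) :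
    (∃ σ ∈ BraidClass M α, HasShadowAt M σ i ∧ HasShadowAt M σ (i + 2)) ∨
      ∃ σ ∈ BraidClass M α, HasShadowAt M σ i ∧ σ.drop (i + 1) = γ.drop (i + 1) := by
  induction hβγ with
  | refl => exact .inr ⟨β, hβ, hβi, rfl⟩
  | @tail γ₀ γ hγ₀ hmove ih =>
    obtain ⟨p, hp⟩ := isBraidMove_iff_exists_isBraidMoveAt.mp hmove
    have hγ₀α : γ₀ ∈ BraidClass M α := Relation.ReflTransGen.trans hβ hγ₀
    have hp_even := Nat.even_iff.mp (hpar p ⟨γ₀, hγ₀α, hp.hasShadowAt_left⟩)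
    have hi_even := Nat.even_iff.mp (hpar i ⟨β, hβ, hβi⟩)
    rcases ih with hdone | ⟨σ₀, hσ₀, hσ₀i, hdrop⟩
    · exact .inl hdone
    obtain rfl | rfl | hleft | hright : p = i ∨ p = i + 2 ∨ p + 3 ≤ i + 1 ∨ i + 3 ≤ p := by
      omega
    · exact .inr ⟨γ, hγ₀α.tail hmove, hp.hasShadowAt_right, rfl⟩
    · exact .inl ⟨σ₀, hσ₀, hσ₀i, hp.hasShadowAt_left.of_drop_eq (by omega) hdrop⟩
    · exact .inr ⟨σ₀, hσ₀, hσ₀i, hdrop.trans (hp.drop_eq hleft).symm⟩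
    · obtain ⟨σ, hσ, hσdrop⟩ := hp.exists_of_drop_eq (by omega) hdrop
      exact .inr ⟨σ, Relation.ReflTransGen.tail hσ₀
        (isBraidMove_iff_exists_isBraidMoveAt.mpr ⟨p, hσ⟩),
        hσ.hasShadowAt_of_disjoint hσ₀i (.inl hright), hσdrop⟩

theorem exists_hasShadowAt_and_hasShadowAt_add_two
    (hpar : ∀ p, ClassHasShadowAt M α p → Even p) (hi : ClassHasShadowAt M α i)
    (hi2 : ClassHasShadowAt M α (i + 2)) :
    ∃ σ ∈ BraidClass M α, HasShadowAt M σ i ∧ HasShadowAt M σ (i + 2) := by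
  obtain ⟨β, hβ, hβi⟩ := hi
  obtain ⟨γ, hγ, hγi⟩ := hi2
  have hβγ : BraidEquiv M β γ := Relation.ReflTransGen.trans (BraidEquiv.symm hβ) hγ
  rcases exists_hasShadowAt_and_hasShadowAt_add_two_or_drop_eq hpar hβ hβi hβγ with
    hdone | ⟨σ, hσ, hσi, hdrop⟩
  · exact hdone
  · exact ⟨σ, hσ, hσi, hγi.of_drop_eq (by omega) hdrop⟩

end ConsecutiveShadows

/-- Here `j + 1` is the paper's `i`: the 1-based intervals `⟦2i-1,2i+1⟧` and `⟦2i+1,2i+3⟧`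
start at the 0-based positions `2j` and `2j+2`. -/
theorem statement_7_general {B W : Type*} [Group W] {M : CoxeterMatrix B}
    (cs : CoxeterSystem M W)
    (α : List B) (r : ℕ) (hlink : IsLink cs α r)
    (j : ℕ) (hj : j + 2 ≤ r) :
    ∃ σ ∈ BraidClass M α, HasShadowAt M σ (2 * j) ∧ HasShadowAt M σ (2 * j + 2) := by
  obtain ⟨-, -, hshadows⟩ := hlink
  refine exists_hasShadowAt_and_hasShadowAt_add_two (fun p hp => ?_)
    ((hshadows _).mpr ⟨j, by omega, rfl⟩) ((hshadows _).mpr ⟨j + 1, by omega, by ring⟩)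
  obtain ⟨k, -, rfl⟩ := (hshadows p).mp hp
  exact even_two_mul k

/-- consecutive braid shadows of a braid chain can be made to occur
simultaneously.  (Here `j + 1` plays the role of the paper's index `i`,
`1 ≤ i ≤ r - 1`; the 1-based intervals `⟦2i-1,2i+1⟧` and `⟦2i+1,2i+3⟧` start at the
0-based positions `2j` and `2j+2`.) -/
theorem statement_7 {B W : Type*} [Group W] {M : CoxeterMatrix B}
    (cs : CoxeterSystem M W) (hsl : SimplyLaced M) (htf : TriangleFree M)
    (α : List B) (r : ℕ) (hlink : IsLink cs α r) (hr : 2 ≤ r)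
    (j : ℕ) (hj : j + 2 ≤ r) :
    ∃ σ ∈ BraidClass M α, HasShadowAt M σ (2 * j) ∧ HasShadowAt M σ (2 * j + 2) :=
  statement_7_general cs α r hlink j hj

end BraidFormal
end
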